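/- Every ok Automath book remains ok after removal of a dead-end assumption line; consequently, the clean book cl(B) of an ok book B is ok. -/

import Mathlib

/-- Content of an Automath line: `---`, `PN`, or a term (abstractly a natural number). -/
inductive Content where
  | dash : Content
  | pn : Content
  | term : ℕ → Content
deriving DecidableEq

/-- An Automath line: indicator (`none` = ε), identifier, content, category. -/
structure Line where
  indicator : Option ℕ
  identifier : ℕ
  content : Content
  category : ℕ
deriving DecidableEq

abbrev Book := List Line

def Line.isAssum (l : Line) : Bool := l.content == Content.dash
def Line.isPrim (l : Line) : Bool := l.content == Content.pn
def Line.isDefin (l : Line) : Bool := match l.content with | .term _ => true | _ => false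

/-- Coherence: identifiers pairwise distinct, and each non-ε indicator is the
identifier of an earlier assumption line. -/
def Coherent (B : Book) : Prop :=
  (B.map Line.identifier).Nodup ∧
  ∀ m : ℕ, ∀ L : Line, B[m]? = some L → ∀ y : ℕ, L.indicator = some y →
    ∃ l : ℕ, l < m ∧ ∃ L' : Line, B[l]? = some L' ∧ L'.identifier = y ∧ L'.isAssum

/-- Index of the assumption line introducing identifier `y`. -/
def introIdx (B : Book) (y : ℕ) : Option ℕ :=
  B.findIdx? (fun l => l.identifier == y && l.isAssum)

/-- Fuel-based computation of the subject-list γ of the line at index `i`. -/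
def gammaAux (B : Book) : ℕ → ℕ → List ℕ
  | 0, i =>
    match B[i]? with
    | none => []
    | some l => [l.identifier]
  | fuel+1, i =>
    match B[i]? with
    | none => []
    | some l =>
      match l.indicator with
      | none => [l.identifier]
      | some y =>
        match introIdx B y with
        | none => [l.identifier]
        | some j => gammaAux B fuel j ++ [l.identifier]

/-- Subject-list γ_z of variable `z` (introduced by an assumption line). γ_ε = []. -/
def gammaOf (B : Book) (z : ℕ) : List ℕ :=
  match introIdx B z with
  | none => []
  | some i => gammaAux B i i

/-- Fuel-based computation of the typing-context Γ of the line at index `i`. -/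
def ctxAux (B : Book) : ℕ → ℕ → List (ℕ × ℕ)
  | 0, i =>
    match B[i]? with
    | none => []
    | some l => [(l.identifier, l.category)]
  | fuel+1, i =>
    match B[i]? with
    | none => []
    | some l =>
      match l.indicator with
      | none => [(l.identifier, l.category)]
      | some y =>
        match introIdx B y with
        | none => [(l.identifier, l.category)]
        | some j => ctxAux B fuel j ++ [(l.identifier, l.category)]

/-- Typing-context Γ_z of variable `z`. Γ_ε = ∅. -/
def ctxOf (B : Book) (z : ℕ) : List (ℕ × ℕ) :=
  match introIdx B z with
  | none => []
  | some i => ctxAux B i i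

/-- Subject-list of an indicator (γ_ε = [] for the empty indicator). -/
def gammaInd (B : Book) : Option ℕ → List ℕ
  | none => []
  | some y => gammaOf B y

/-- Typing-context of an indicator. -/
def ctxInd (B : Book) : Option ℕ → List (ℕ × ℕ)
  | none => []
  | some y => ctxOf B y

/-- y ≺ z : some line of `B` has indicator `y` (≠ ε) and identifier `z`. -/
def Prec (B : Book) (y z : ℕ) : Prop :=
  ∃ L ∈ B, L.indicator = some y ∧ L.identifier = z

/-- The line at index `i` is a dead-end assumption line. -/
def DeadEnd (B : Book) (i : ℕ) : Prop :=
  ∃ L : Line, B[i]? = some L ∧ L.isAssum ∧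
    ∀ j : ℕ, i < j → ∀ L' : Line, B[j]? = some L' → L'.indicator ≠ some L.identifier

/-- One removal step: delete a single dead-end assumption line. -/
def Step (B B' : Book) : Prop := ∃ i : ℕ, DeadEnd B i ∧ B' = B.eraseIdx i

/-- A clean book: coherent with no dead-end assumption lines. -/
def IsClean (B : Book) : Prop := Coherent B ∧ ∀ i : ℕ, ¬ DeadEnd B i

/-- An entry of the λD-environment Δ_B. -/
structure Entry where
  ctx : List (ℕ × ℕ)
  const : ℕ
  args : List ℕ
  content : Content
  category : ℕ

def Fresh (B : Book) (x : ℕ) : Prop := ∀ L ∈ B, L.identifier ≠ x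

def IndOk (B : Book) : Option ℕ → Prop
  | none => True
  | some z => ∃ L ∈ B, L.identifier = z ∧ L.isAssum

/-- Well-formed (ok) books with their translation Δ_B, relative to abstract
typing judgements `J Δ Γ M A` (Δ; Γ ⊢ M : A) and `S Δ Γ A` (Δ; Γ ⊢ A : s). -/
inductive Ok (J : List Entry → List (ℕ × ℕ) → ℕ → ℕ → Prop)
    (S : List Entry → List (ℕ × ℕ) → ℕ → Prop) : Book → List Entry → Prop
  | nil : Ok J S [] []
  | assum {B : Book} {Δ : List Entry} {ind : Option ℕ} {x A : ℕ} :
      Ok J S B Δ → Fresh B x → IndOk B ind → S Δ (ctxInd B ind) A →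
      Ok J S (B ++ [⟨ind, x, Content.dash, A⟩]) Δ
  | defin {B : Book} {Δ : List Entry} {ind : Option ℕ} {c M A : ℕ} :
      Ok J S B Δ → Fresh B c → IndOk B ind → J Δ (ctxInd B ind) M A →
      Ok J S (B ++ [⟨ind, c, Content.term M, A⟩])
        (Δ ++ [⟨ctxInd B ind, c, gammaInd B ind, Content.term M, A⟩])
  | prim {B : Book} {Δ : List Entry} {ind : Option ℕ} {c A : ℕ} :
      Ok J S B Δ → Fresh B c → IndOk B ind → S Δ (ctxInd B ind) A →
      Ok J S (B ++ [⟨ind, c, Content.pn, A⟩])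
        (Δ ++ [⟨ctxInd B ind, c, gammaInd B ind, Content.pn, A⟩])

/-!
Indicators only point backwards, so the identifier `x` of a dead-end assumption line is used
as an indicator nowhere in the book. Hence the chain of indicators behind any other line never
passes through `x`, and erasing the line changes neither γ nor Γ of any remaining indicator.
Replaying the derivation of the book without that line then gives the same side conditions and
the same Δ, since an assumption line contributes nothing to Δ.
-/

namespace List

variable {α : Type*}

theorem getElem?_eraseIdx_of_ne (l : List α) {i k : ℕ} (hk : k ≠ i) :
    (l.eraseIdx i)[if k < i then k else k - 1]? = l[k]? := by
  rcases lt_or_gt_of_ne hk with h | h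
  · rw [if_pos h, getElem?_eraseIdx_of_lt h]
  · rw [if_neg (by omega), getElem?_eraseIdx_of_ge (by omega), Nat.sub_add_cancel (by omega)]

theorem getElem?_append_singleton_eq_some {l : List α} {a b : α} {m : ℕ} :
    (l ++ [a])[m]? = some b ↔ (m < l.length ∧ l[m]? = some b) ∨ (m = l.length ∧ a = b) := by
  rcases lt_trichotomy m l.length with h | rfl | h
  · simp [getElem?_append_left h, h, h.ne]
  · simp
  · rw [getElem?_append_right h.le, getElem?_singleton, if_neg (by omega)]
    simp [h.ne', h.not_gt]

theorem eraseIdx_length_append_singleton (l : List α) (a : α) :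
    (l ++ [a]).eraseIdx l.length = l := by
  simp [eraseIdx_append_of_length_le le_rfl]

end List

theorem introIdx_eq_some_iff {B : Book} (hN : (B.map Line.identifier).Nodup) {y j : ℕ} :
    introIdx B y = some j ↔ ∃ a, B[j]? = some a ∧ a.identifier = y ∧ a.isAssum := by
  rw [introIdx, List.findIdx?_eq_some_iff_getElem]
  constructor
  · rintro ⟨hj, hp, -⟩
    simp only [Bool.and_eq_true, beq_iff_eq] at hp
    exact ⟨B[j], List.getElem?_eq_getElem hj, hp⟩
  · rintro ⟨a, ha, hid, hA⟩
    obtain ⟨hj, rfl⟩ := List.getElem?_eq_some_iff.mp ha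
    refine ⟨hj, by simp [hid, hA], fun m hm hp => ?_⟩
    simp only [Bool.and_eq_true, beq_iff_eq] at hp
    have hmj : m = j := (hN.getElem_inj_iff (hi := by simpa using hm.trans hj)
      (hj := by simpa using hj)).mp (by simp [hp.1, hid])
    omega

theorem Coherent.exists_introIdx_lt {B : Book} (hC : Coherent B) {k y : ℕ} {l : Line}
    (hk : B[k]? = some l) (hy : l.indicator = some y) : ∃ j < k, introIdx B y = some j := by
  obtain ⟨j, hjk, a, ha, hid, hA⟩ := hC.2 k l hk y hy
  exact ⟨j, hjk, (introIdx_eq_some_iff hC.1).mpr ⟨a, ha, hid, hA⟩⟩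

theorem Coherent.ctxAux_succ {B : Book} (hC : Coherent B) :
    ∀ {f k : ℕ}, k ≤ f → ctxAux B (f + 1) k = ctxAux B f k
  | 0, k, hk => by
    obtain rfl : k = 0 := by omega
    rw [ctxAux, ctxAux]
    cases hB : B[0]? with
    | none => rfl
    | some l =>
      cases hy : l.indicator with
      | none => simp only [hy]
      | some y =>
        obtain ⟨j, hj, -⟩ := hC.exists_introIdx_lt hB hy
        omega
  | f + 1, k, hk => by
    rw [ctxAux, ctxAux]
    cases hB : B[k]? with
    | none => rfl
    | some l =>
      cases hy : l.indicator with
      | none => simp only [hy]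
      | some y =>
        obtain ⟨j, hj, hI⟩ := hC.exists_introIdx_lt hB hy
        simp only [hy, hI, hC.ctxAux_succ (f := f) (k := j) (by omega)]

theorem Coherent.ctxAux_eq_of_le {B : Book} (hC : Coherent B) {f k : ℕ} (h : k ≤ f) :
    ctxAux B f k = ctxAux B k k := by
  induction f, h using Nat.le_induction with
  | base => rfl
  | succ f hkf ih => rw [hC.ctxAux_succ hkf, ih]

theorem gammaAux_eq_map_fst (B : Book) :
    ∀ f k, gammaAux B f k = (ctxAux B f k).map Prod.fst
  | 0, k => by
    rw [gammaAux, ctxAux]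
    cases B[k]? <;> rfl
  | f + 1, k => by
    rw [gammaAux, ctxAux]
    cases B[k]? with
    | none => rfl
    | some l =>
      cases hy : l.indicator with
      | none => simp only [hy, List.map_singleton]
      | some y =>
        cases hI : introIdx B y with
        | none => simp only [hy, hI, List.map_singleton]
        | some j => simp only [hy, hI, gammaAux_eq_map_fst B f j, List.map_append,
            List.map_singleton]

theorem gammaInd_eq_map_fst (B : Book) :
    ∀ ind, gammaInd B ind = (ctxInd B ind).map Prod.fst
  | none => rfl
  | some z => by
    rw [gammaInd, ctxInd, gammaOf, ctxOf]
    cases introIdx B z with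
    | none => rfl
    | some k => exact gammaAux_eq_map_fst B k k

section EraseIdx

variable {B : Book} {i : ℕ} {L : Line}

theorem ne_of_getElem?_identifier_ne (hiL : B[i]? = some L) {j : ℕ} {a : Line}
    (ha : B[j]? = some a) (h : a.identifier ≠ L.identifier) : j ≠ i := by
  rintro rfl
  exact h (by rw [Option.some_inj.mp (ha.symm.trans hiL)])

theorem introIdx_eraseIdx_eq_none {y : ℕ} (h : introIdx B y = none) :
    introIdx (B.eraseIdx i) y = none := by
  rw [introIdx, List.findIdx?_eq_none_iff] at h ⊢
  exact fun a ha => h a ((B.eraseIdx_sublist i).subset ha)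

theorem introIdx_eraseIdx_eq_some (hN : (B.map Line.identifier).Nodup)
    (hiL : B[i]? = some L) {y j : ℕ} (hy : y ≠ L.identifier) (h : introIdx B y = some j) :
    j ≠ i ∧ introIdx (B.eraseIdx i) y = some (if j < i then j else j - 1) := by
  obtain ⟨a, ha, hid, hA⟩ := (introIdx_eq_some_iff hN).mp h
  have hji : j ≠ i := ne_of_getElem?_identifier_ne hiL ha (hid ▸ hy)
  refine ⟨hji, (introIdx_eq_some_iff (hN.sublist ((B.eraseIdx_sublist i).map _))).mpr
    ⟨a, ?_, hid, hA⟩⟩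
  rw [List.getElem?_eraseIdx_of_ne B hji, ha]

theorem ctxAux_eraseIdx (hN : (B.map Line.identifier).Nodup) (hiL : B[i]? = some L)
    (hx : ∀ L' ∈ B, L'.indicator ≠ some L.identifier) :
    ∀ f k, k ≠ i → ctxAux (B.eraseIdx i) f (if k < i then k else k - 1) = ctxAux B f k
  | 0, k, hk => by rw [ctxAux, ctxAux, List.getElem?_eraseIdx_of_ne B hk]
  | f + 1, k, hk => by
    rw [ctxAux, ctxAux, List.getElem?_eraseIdx_of_ne B hk]
    cases hB : B[k]? with
    | none => rfl
    | some l =>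
      cases hy : l.indicator with
      | none => simp only [hy]
      | some y =>
        have hyL : y ≠ L.identifier := fun h => hx l (List.mem_of_getElem? hB) (h ▸ hy)
        cases hI : introIdx B y with
        | none => simp only [hy, hI, introIdx_eraseIdx_eq_none hI]
        | some j =>
          obtain ⟨hji, hI'⟩ := introIdx_eraseIdx_eq_some hN hiL hyL hI
          simp only [hy, hI, hI', ctxAux_eraseIdx hN hiL hx f j hji]

theorem Coherent.eraseIdx (hC : Coherent B) (hiL : B[i]? = some L)
    (hx : ∀ L' ∈ B, L'.indicator ≠ some L.identifier) : Coherent (B.eraseIdx i) := by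
  refine ⟨hC.1.sublist ((B.eraseIdx_sublist i).map _), fun m l hm y hy => ?_⟩
  obtain ⟨k, hkm, hBk⟩ : ∃ k, (k = m ∧ m < i ∨ k = m + 1 ∧ i ≤ m) ∧ B[k]? = some l := by
    rw [List.getElem?_eraseIdx] at hm
    split_ifs at hm with h
    exacts [⟨m, .inl ⟨rfl, h⟩, hm⟩, ⟨m + 1, .inr ⟨rfl, by omega⟩, hm⟩]
  obtain ⟨j, hjk, a, ha, hid, hA⟩ := hC.2 k l hBk y hy
  have hji : j ≠ i :=
    ne_of_getElem?_identifier_ne hiL ha (hid ▸ fun h => hx l (List.mem_of_getElem? hBk) (h ▸ hy))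
  exact ⟨if j < i then j else j - 1, by split_ifs <;> omega, a,
    by rw [List.getElem?_eraseIdx_of_ne B hji, ha], hid, hA⟩

theorem ctxOf_eraseIdx (hC : Coherent B) (hiL : B[i]? = some L)
    (hx : ∀ L' ∈ B, L'.indicator ≠ some L.identifier) {z : ℕ} (hz : z ≠ L.identifier) :
    ctxOf (B.eraseIdx i) z = ctxOf B z := by
  unfold ctxOf
  cases hI : introIdx B z with
  | none => rw [introIdx_eraseIdx_eq_none hI]
  | some k =>
    obtain ⟨hki, hI'⟩ := introIdx_eraseIdx_eq_some hC.1 hiL hz hI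
    have hle : (if k < i then k else k - 1) ≤ k := by split_ifs <;> omega
    rw [hI']
    dsimp only
    -- `ctxOf` runs `ctxAux` with the index as fuel, which the erasure may lower by one
    rw [← (hC.eraseIdx hiL hx).ctxAux_eq_of_le hle, ctxAux_eraseIdx hC.1 hiL hx k k hki]

theorem ctxInd_eraseIdx (hC : Coherent B) (hiL : B[i]? = some L)
    (hx : ∀ L' ∈ B, L'.indicator ≠ some L.identifier) {ind : Option ℕ}
    (hind : ind ≠ some L.identifier) : ctxInd (B.eraseIdx i) ind = ctxInd B ind := by
  cases ind with
  | none => rfl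
  | some z => exact ctxOf_eraseIdx hC hiL hx (fun h => hind (h ▸ rfl))

theorem gammaInd_eraseIdx (hC : Coherent B) (hiL : B[i]? = some L)
    (hx : ∀ L' ∈ B, L'.indicator ≠ some L.identifier) {ind : Option ℕ}
    (hind : ind ≠ some L.identifier) : gammaInd (B.eraseIdx i) ind = gammaInd B ind := by
  rw [gammaInd_eq_map_fst, gammaInd_eq_map_fst, ctxInd_eraseIdx hC hiL hx hind]

theorem Fresh.eraseIdx {x : ℕ} (h : Fresh B x) : Fresh (B.eraseIdx i) x :=
  fun l hl => h l ((B.eraseIdx_sublist i).subset hl)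

theorem IndOk.eraseIdx (hiL : B[i]? = some L) {ind : Option ℕ}
    (hind : ind ≠ some L.identifier) (h : IndOk B ind) : IndOk (B.eraseIdx i) ind := by
  cases ind with
  | none => trivial
  | some z =>
    obtain ⟨a, ha, hid, hA⟩ := h
    obtain ⟨j, hj⟩ := List.mem_iff_getElem?.mp ha
    have hji : j ≠ i := ne_of_getElem?_identifier_ne hiL hj (hid ▸ fun h => hind (h ▸ rfl))
    exact ⟨a, List.mem_eraseIdx_iff_getElem?.mpr ⟨j, hji, hj⟩, hid, hA⟩

end EraseIdx

theorem Coherent.append_singleton {B : Book} {ind : Option ℕ} {x A : ℕ} {c : Content}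
    (hC : Coherent B) (hF : Fresh B x) (hI : IndOk B ind) :
    Coherent (B ++ [⟨ind, x, c, A⟩]) := by
  refine ⟨?_, fun m l hm y hy => ?_⟩
  · rw [List.map_append, List.nodup_append]
    refine ⟨hC.1, List.nodup_singleton _, ?_⟩
    simpa using fun a ha => hF a ha
  · rcases List.getElem?_append_singleton_eq_some.mp hm with ⟨hm, hBm⟩ | ⟨rfl, rfl⟩
    · obtain ⟨j, hjm, a, ha, hid, hA⟩ := hC.2 m l hBm y hy
      exact ⟨j, hjm, a, List.getElem?_append_singleton_eq_some.mpr (.inl ⟨by omega, ha⟩), hid, hA⟩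
    · obtain ⟨a, ha, hid, hA⟩ : IndOk B (some y) := hy ▸ hI
      obtain ⟨j, hj⟩ := List.mem_iff_getElem?.mp ha
      have hjB : j < B.length := (List.getElem?_eq_some_iff.mp hj).1
      exact ⟨j, hjB, a, List.getElem?_append_singleton_eq_some.mpr (.inl ⟨hjB, hj⟩), hid, hA⟩

section Ok

variable {J : List Entry → List (ℕ × ℕ) → ℕ → ℕ → Prop}
  {S : List Entry → List (ℕ × ℕ) → ℕ → Prop} {B : Book} {Δ : List Entry}

theorem Ok.coherent (h : Ok J S B Δ) : Coherent B := by
  induction h with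
  | nil => exact ⟨List.nodup_nil, fun m l hm => by simp at hm⟩
  | assum _ hF hI _ ih | defin _ hF hI _ ih | prim _ hF hI _ ih =>
    exact ih.append_singleton hF hI

theorem Ok.eraseIdx_of_forall_indicator_ne (h : Ok J S B Δ) {i : ℕ} {L : Line}
    (hiL : B[i]? = some L) (hA : L.isAssum)
    (hx : ∀ L' ∈ B, L'.indicator ≠ some L.identifier) : Ok J S (B.eraseIdx i) Δ := by
  induction h with
  | nil => simp at hiL
  | assum hOk hF hI hS ih | defin hOk hF hI hS ih | prim hOk hF hI hS ih =>
    rw [List.forall_mem_append, List.forall_mem_singleton] at hx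
    rcases List.getElem?_append_singleton_eq_some.mp hiL with ⟨hi, hiL⟩ | ⟨rfl, rfl⟩
    · have hC := hOk.coherent
      simp only [List.eraseIdx_append_of_lt_length hi, ← ctxInd_eraseIdx hC hiL hx.1 hx.2,
        ← gammaInd_eraseIdx hC hiL hx.1 hx.2]
      constructor
      exacts [ih hiL hx.1, hF.eraseIdx, hI.eraseIdx hiL hx.2,
        by rwa [ctxInd_eraseIdx hC hiL hx.1 hx.2]]
    · -- the erased line is the last one: a contradiction unless it was added by `assum`
      simp_all [Line.isAssum, List.eraseIdx_length_append_singleton]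

theorem Ok.eraseIdx_of_deadEnd (h : Ok J S B Δ) {i : ℕ} (hDE : DeadEnd B i) :
    Ok J S (B.eraseIdx i) Δ := by
  obtain ⟨L, hiL, hA, hlater⟩ := hDE
  refine h.eraseIdx_of_forall_indicator_ne hiL hA fun l hl hy => ?_
  obtain ⟨j, hj⟩ := List.mem_iff_getElem?.mp hl
  rcases lt_or_ge i j with hij | hji
  · exact hlater j hij l hj hy
  · have hC := h.coherent
    obtain ⟨k, hkj, a, ha, hid, hA'⟩ := hC.2 j l hj _ hy
    have hki : k = i := Option.some_inj.mp <| ((introIdx_eq_some_iff hC.1).mpr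
      ⟨a, ha, hid, hA'⟩).symm.trans ((introIdx_eq_some_iff hC.1).mpr ⟨L, hiL, rfl, hA⟩)
    omega

end Ok

/-- an ok book remains ok after removal of a dead-end assumption line;
consequently every book obtained by repeatedly removing dead-ends (in particular
the clean book cl(B)) is ok, with the same Δ. -/
theorem stmt11 (J : List Entry → List (ℕ × ℕ) → ℕ → ℕ → Prop)
    (S : List Entry → List (ℕ × ℕ) → ℕ → Prop)
    (B : Book) (Δ : List Entry) (h : Ok J S B Δ) :
    (∀ i : ℕ, DeadEnd B i → Ok J S (B.eraseIdx i) Δ) ∧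
    (∀ C : Book, Relation.ReflTransGen Step B C → Ok J S C Δ) := by
  refine ⟨fun _ hDE => h.eraseIdx_of_deadEnd hDE, fun C hBC => ?_⟩
  induction hBC with
  | refl => exact h
  | tail _ hstep ih =>
    obtain ⟨i, hDE, rfl⟩ := hstep
    exact ih.eraseIdx_of_deadEnd hDE
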